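/- arXiv:2211.09236 — 5 statements merged into one kernel-verified Lean document; each statement's English description precedes it below -/
import Mathlib

section
/- Let t > 0 and suppose c: ℝ → H is a continuous map into a complex Hilbert space and π: ℝ → U(H) is a unitary representation with c(b+d) = c(b) + π(b)c(d) for all b, d, and ‖c(λ²b)‖ = λᵗ‖c(b)‖ for all λ > 0. If c is not identically zero, then t ≤ 2. -/
/-! Subadditivity of the cocycle gives `‖c (4 b)‖ ≤ 4 ‖c b‖`, while homogeneity with `λ = 2`
gives `‖c (4 b)‖ = 2 ^ t ‖c b‖`; at a point where `c b ≠ 0` this forces `2 ^ t ≤ 2 ^ 2`. -/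

theorem cocycle_zero {G R E : Type*} [AddMonoid G] [Semiring R]
    [SeminormedAddCommGroup E] [Module R E] (c : G → E) (π : G → E ≃ₗᵢ[R] E)
    (hcoc : ∀ b d : G, c (b + d) = c b + π b (c d)) : c 0 = 0 := by
  have h := hcoc 0 0
  rwa [add_zero, left_eq_add, LinearIsometryEquiv.map_eq_zero_iff] at h

theorem norm_cocycle_nsmul_le {G R E : Type*} [AddMonoid G] [Semiring R]
    [SeminormedAddCommGroup E] [Module R E] (c : G → E) (π : G → E ≃ₗᵢ[R] E)
    (hcoc : ∀ b d : G, c (b + d) = c b + π b (c d)) (b : G) (n : ℕ) :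
    ‖c (n • b)‖ ≤ n * ‖c b‖ := by
  induction n with
  | zero => simp [cocycle_zero c π hcoc]
  | succ n ih =>
    calc ‖c ((n + 1) • b)‖ = ‖c b + π b (c (n • b))‖ := by rw [succ_nsmul', hcoc]
      _ ≤ ‖c b‖ + ‖c (n • b)‖ := (norm_add_le _ _).trans_eq (by rw [LinearIsometryEquiv.norm_map])
      _ ≤ (n + 1 : ℕ) * ‖c b‖ := by push_cast; linarith

theorem stmt7_general {H : Type*} [NormedAddCommGroup H] [InnerProductSpace ℂ H]
    (t : ℝ) (c : ℝ → H)
    (π : ℝ → (H ≃ₗᵢ[ℂ] H))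
    (hcoc : ∀ b d : ℝ, c (b + d) = c b + π b (c d))
    (hhom : ∀ l : ℝ, 0 < l → ∀ b : ℝ, ‖c (l ^ 2 * b)‖ = l ^ t * ‖c b‖)
    (hne : ∃ b : ℝ, c b ≠ 0) :
    t ≤ 2 := by
  obtain ⟨b, hb⟩ := hne
  have hle : (2 : ℝ) ^ t * ‖c b‖ ≤ 2 ^ (2 : ℝ) * ‖c b‖ :=
    calc (2 : ℝ) ^ t * ‖c b‖ = ‖c ((4 : ℕ) • b)‖ := by
          rw [nsmul_eq_mul, ← hhom 2 two_pos]; norm_num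
      _ ≤ (4 : ℕ) * ‖c b‖ := norm_cocycle_nsmul_le c π hcoc b 4
      _ = 2 ^ (2 : ℝ) * ‖c b‖ := by norm_num
  exact (Real.rpow_le_rpow_left_iff one_lt_two).mp (le_of_mul_le_mul_right hle (norm_pos_iff.mpr hb))

theorem stmt7 {H : Type*} [NormedAddCommGroup H] [InnerProductSpace ℂ H] [CompleteSpace H]
    (t : ℝ) (ht : 0 < t) (c : ℝ → H) (hc : Continuous c)
    (π : ℝ → (H ≃ₗᵢ[ℂ] H)) (hπ : ∀ a b : ℝ, π (a + b) = (π a).trans (π b))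
    (hcoc : ∀ b d : ℝ, c (b + d) = c b + π b (c d))
    (hhom : ∀ l : ℝ, 0 < l → ∀ b : ℝ, ‖c (l ^ 2 * b)‖ = l ^ t * ‖c b‖)
    (hne : ∃ b : ℝ, c b ≠ 0) :
    t ≤ 2 :=
  stmt7_general t c π hcoc hhom hne
end

section
/- Suppose c: ℝ → H satisfies the cocycle identity c(b+d) = c(b) + π(b)c(d) for a unitary representation π of (ℝ,+), and suppose ‖c(2b)‖ = 2‖c(b)‖ for all b. Then π(d)c(b) = c(b) for all b, d ∈ ℝ; in particular b ↦ c(b) is additive (linear over ℚ). -/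
/-!
Since `c (b + b) = c b + π b (c b)` and `π b` is an isometry, the hypothesis on `‖c (2 * b)‖` is
the equality case of the triangle inequality, so strict convexity gives `π b (c b) = c b`.
Applying this to `b + d` and expanding both `c (b + d)` and `c (d + b)` by the cocycle identity
shows that `π (b + b + d)` fixes `c d`; over `ℝ` every `t` is of the form `b + b + d`.
-/

section Cocycle

variable {G 𝕜 E : Type*} [AddCommGroup G] [Semiring 𝕜] [NormedAddCommGroup E] [Module 𝕜 E]
  {π : G → E ≃ₗᵢ[𝕜] E} {c : G → E}

theorem cocycle_apply_self_eq_of_norm_add_self [NormedSpace ℝ E] [StrictConvexSpace ℝ E]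
    (hcoc : ∀ b d, c (b + d) = c b + π b (c d)) {b : G} (hb : ‖c (b + b)‖ = 2 * ‖c b‖) :
    π b (c b) = c b := by
  have hnorm : ‖π b (c b)‖ = ‖c b‖ := (π b).norm_map _
  refine (eq_of_norm_eq_of_norm_add_eq hnorm.symm ?_).symm
  rw [← hcoc, hb, hnorm, two_mul]

theorem cocycle_apply_add_add_eq (hπ : ∀ a b, π (a + b) = (π a).trans (π b))
    (hcoc : ∀ b d, c (b + d) = c b + π b (c d)) (hfix : ∀ b, π b (c b) = c b) (b d : G) :
    π (b + b + d) (c d) = c d := by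
  refine add_left_cancel (a := π d (c b)) ?_
  calc π d (c b) + π (b + b + d) (c d)
      = π (b + d) (c (b + d)) := by
        rw [hcoc b d, hπ b d, hπ, hπ]
        simp only [LinearIsometryEquiv.trans_apply, map_add, hfix b]
    _ = c (d + b) := by rw [hfix, add_comm b d]
    _ = π d (c b) + c d := by rw [hcoc, add_comm]

end Cocycle

theorem stmt8_general {H : Type*} [NormedAddCommGroup H] [InnerProductSpace ℂ H]
    (c : ℝ → H) (π : ℝ → (H ≃ₗᵢ[ℂ] H))
    (hπ : ∀ a b : ℝ, π (a + b) = (π a).trans (π b))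
    (hcoc : ∀ b d : ℝ, c (b + d) = c b + π b (c d))
    (hnorm : ∀ b : ℝ, ‖c (2 * b)‖ = 2 * ‖c b‖) :
    (∀ b d : ℝ, π d (c b) = c b) ∧ (∀ b d : ℝ, c (b + d) = c b + c d) := by
  let _ := InnerProductSpace.rclikeToReal ℂ H
  have hfix : ∀ b, π b (c b) = c b := fun b =>
    cocycle_apply_self_eq_of_norm_add_self hcoc (by rw [← two_mul]; exact hnorm b)
  have hinv : ∀ b d, π d (c b) = c b := fun b d => by
    simpa using cocycle_apply_add_add_eq hπ hcoc hfix ((d - b) / 2) b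
  exact ⟨hinv, fun b d => by rw [hcoc, hinv]⟩

theorem stmt8 {H : Type*} [NormedAddCommGroup H] [InnerProductSpace ℂ H] [CompleteSpace H]
    (c : ℝ → H) (π : ℝ → (H ≃ₗᵢ[ℂ] H))
    (hπ : ∀ a b : ℝ, π (a + b) = (π a).trans (π b))
    (hcoc : ∀ b d : ℝ, c (b + d) = c b + π b (c d))
    (hnorm : ∀ b : ℝ, ‖c (2 * b)‖ = 2 * ‖c b‖) :
    (∀ b d : ℝ, π d (c b) = c b) ∧ (∀ b d : ℝ, c (b + d) = c b + c d) :=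
  stmt8_general c π hπ hcoc hnorm
end

section
/- Let 0 < t < 2 with t ≠ 1, let K(1) ∈ ℂ be nonzero, and define for b,d ∈ ℝ the kernel ⟨c(b), c(d)⟩ := (−|b−d|ᵗ + |b|ᵗ + |d|ᵗ)·Re(−K(1)) + i·(sgn(b−d)|b−d|ᵗ − sgn(b)|b|ᵗ + sgn(d)|d|ᵗ)·Im(K(1)) (with sgn(0)·0 := 0), arising from vectors c(b) in a Hilbert space. Then the family {c(b)}_{b ∈ ℝ∖{0}} is ℂ-linearly independent. -/
/-
If `∑ aᵢ c(bᵢ) = 0`, pairing with `c(d)` gives `∑ conj(aᵢ) ⟨c(bᵢ), c(d)⟩ = 0` for every `d`.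
The kernel is `κ(b - d) - κ(b) - κ(-d)` with `κ(x) = |x|ᵗ Re K(1) + i sgn(x) |x|ᵗ Im K(1)`,
which is smooth away from `0`. Near `d = bⱼ` every term except `conj(aⱼ) κ(bⱼ - d)` is
therefore smooth, so `conj(aⱼ) κ` is `C²` at `0`. For a `C²` function the second difference
`f(ε) + f(-ε) - 2f(0)` and the odd difference `f(2ε) - f(-2ε) - 2(f(ε) - f(-ε))` are `O(ε²)`,
while for `κ` they equal `2εᵗ Re K(1)` and `(2·2ᵗ - 4) εᵗ i Im K(1)`. As `t < 2` and `t ≠ 1`,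
this forces `aⱼ = 0` or `K(1) = 0`.
-/

open Complex

/-- The kernel of Lemma 1.24: `⟨c(b), c(d)⟩` expressed in terms of `t` and `K(1)`. -/
noncomputable def kerK (t : ℝ) (K1 : ℂ) (b d : ℝ) : ℂ :=
  (((-(|b - d| ^ t) + |b| ^ t + |d| ^ t) * (-K1).re : ℝ) : ℂ) +
    Complex.I * ((Real.sign (b - d) * |b - d| ^ t - Real.sign b * |b| ^ t +
      Real.sign d * |d| ^ t) * K1.im : ℝ)

open Asymptotics Filter Topology Metric

section FiniteDifferences

variable {E : Type*} [NormedAddCommGroup E] [NormedSpace ℝ E]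

theorem ContDiffAt.isBigO_sub_sub_smul_deriv {f : ℝ → E} {x : ℝ} (hf : ContDiffAt ℝ 2 f x) :
    (fun h => f (x + h) - f x - h • deriv f x) =O[𝓝 0] fun h => h ^ 2 := by
  have hderiv : ∀ᶠ y in 𝓝 x, HasDerivAt f (deriv f y) y :=
    (hf.eventually (by simp)).mono fun y hy =>
      (hy.differentiableAt (by norm_num)).hasDerivAt
  obtain ⟨C, hC0, hC⟩ :=
    ((hf.derivWithin (m := 1) le_rfl).differentiableAt one_ne_zero).isBigO_sub.exists_nonneg
  obtain ⟨r, hr, hball⟩ := eventually_nhds_iff_ball.1 (hderiv.and hC.bound)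
  refine IsBigO.of_bound C ?_
  filter_upwards [ball_mem_nhds 0 hr] with h hh
  have hsub : closedBall x |h| ⊆ ball x r :=
    closedBall_subset_ball (by simpa using hh)
  have key := (convex_closedBall x |h|).norm_image_sub_le_of_norm_hasDerivWithin_le
    (f := fun y => f y - (y - x) • deriv f x) (f' := fun y => deriv f y - deriv f x)
    (C := C * |h|) (y := x + h)
    (fun y hy => (((hball y (hsub hy)).1.sub
      (((hasDerivAt_id y).sub_const x).smul_const (deriv f x))).congr_deriv
        (by simp)).hasDerivWithinAt)
    (fun y hy => (hball y (hsub hy)).2.trans (by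
      gcongr; simpa [← dist_eq_norm] using hy))
    (mem_closedBall_self (abs_nonneg h)) (by simp)
  simpa [norm_pow, sq, mul_assoc, sub_sub, add_comm] using key

theorem ContDiffAt.isBigO_sub_sub_smul_deriv_mul {f : ℝ → E} {x : ℝ} (hf : ContDiffAt ℝ 2 f x)
    (c : ℝ) : (fun h => f (x + c * h) - f x - (c * h) • deriv f x) =O[𝓝 0] fun h => h ^ 2 := by
  have hc : Tendsto (fun h : ℝ => c * h) (𝓝 0) (𝓝 0) := by
    simpa using (continuous_const_mul c).tendsto 0
  refine (hf.isBigO_sub_sub_smul_deriv.comp_tendsto hc).trans ?_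
  simpa only [Function.comp_def, mul_pow] using
    isBigO_const_mul_self (c ^ 2) (fun h : ℝ => h ^ 2) (𝓝 0)

theorem ContDiffAt.isBigO_add_sub_two_smul {f : ℝ → E} {x : ℝ} (hf : ContDiffAt ℝ 2 f x) :
    (fun h => f (x + h) + f (x - h) - (2 : ℝ) • f x) =O[𝓝 0] fun h => h ^ 2 := by
  refine ((hf.isBigO_sub_sub_smul_deriv_mul 1).add
    (hf.isBigO_sub_sub_smul_deriv_mul (-1))).congr_left fun h => ?_
  simp only [one_mul, neg_one_mul, ← sub_eq_add_neg]
  module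

theorem ContDiffAt.isBigO_sub_sub_two_smul_sub {f : ℝ → E} {x : ℝ} (hf : ContDiffAt ℝ 2 f x) :
    (fun h => f (x + 2 * h) - f (x - 2 * h) - (2 : ℝ) • (f (x + h) - f (x - h)))
      =O[𝓝 0] fun h => h ^ 2 := by
  have hR := hf.isBigO_sub_sub_smul_deriv_mul
  refine (((hR 2).sub (hR (-2))).sub (((hR 1).sub (hR (-1))).const_smul_left (2 : ℝ))).congr_left
    fun h => ?_
  simp only [Pi.smul_apply, one_mul, neg_mul, ← sub_eq_add_neg]
  module

theorem eq_zero_of_isBigO_rpow_smul {t : ℝ} (ht : t < 2) {w : E}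
    (h : (fun ε : ℝ => ε ^ t • w) =O[𝓝[>] 0] fun ε => ε ^ 2) : w = 0 := by
  obtain ⟨C, hC⟩ := h.bound
  have hlim : Tendsto (fun ε : ℝ => C * ε ^ (2 - t)) (𝓝[>] 0) (𝓝 0) := by
    have := ((Real.continuousAt_rpow_const 0 (2 - t) (Or.inr (by linarith))).tendsto).const_mul C
    simpa [Real.zero_rpow (by linarith : 2 - t ≠ 0)] using this.mono_left nhdsWithin_le_nhds
  refine norm_le_zero_iff.1 (ge_of_tendsto hlim ?_)
  filter_upwards [hC, self_mem_nhdsWithin] with ε hε (hε0 : 0 < ε)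
  have hεt : 0 < ε ^ t := Real.rpow_pos_of_pos hε0 t
  rw [norm_smul, Real.norm_of_nonneg hεt.le, norm_pow, Real.norm_of_nonneg hε0.le] at hε
  rw [Real.rpow_sub hε0, Real.rpow_two, mul_div_assoc', le_div_iff₀ hεt, mul_comm]
  exact hε

theorem eq_zero_of_contDiffAt_abs_rpow_smul_add {t : ℝ} (ht0 : 0 < t) (ht2 : t < 2)
    (ht1 : t ≠ 1) {u v : E}
    (h : ContDiffAt ℝ 2 (fun x : ℝ => |x| ^ t • u + (Real.sign x * |x| ^ t) • v) 0) :
    u = 0 ∧ v = 0 := by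
  have h2t : (2 : ℝ) * 2 ^ t - 4 ≠ 0 := by
    have : (2 : ℝ) ^ t ≠ 2 ^ (1 : ℝ) := by
      rwa [Ne, Real.rpow_right_inj two_pos (by norm_num)]
    rw [Real.rpow_one] at this
    contrapose! this
    linarith
  constructor
  · have heven : (fun ε : ℝ => ε ^ t • ((2 : ℝ) • u)) =O[𝓝[>] 0] fun ε => ε ^ 2 := by
      refine (h.isBigO_add_sub_two_smul.mono nhdsWithin_le_nhds).congr' ?_ EventuallyEq.rfl
      filter_upwards [self_mem_nhdsWithin] with ε (hε : 0 < ε)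
      simp [abs_of_pos hε, Real.sign_of_pos hε, Real.sign_of_neg (neg_neg_of_pos hε),
        Real.zero_rpow ht0.ne']
      module
    simpa using eq_zero_of_isBigO_rpow_smul ht2 heven
  · have hodd : (fun ε : ℝ => ε ^ t • ((2 * 2 ^ t - 4 : ℝ) • v)) =O[𝓝[>] 0] fun ε => ε ^ 2 := by
      refine (h.isBigO_sub_sub_two_smul_sub.mono nhdsWithin_le_nhds).congr' ?_ EventuallyEq.rfl
      filter_upwards [self_mem_nhdsWithin] with ε (hε : 0 < ε)
      have h2ε : 0 < 2 * ε := by positivity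
      simp [abs_of_pos hε, abs_of_pos h2ε, Real.sign_of_pos hε, Real.sign_of_pos h2ε,
        Real.sign_of_neg (neg_neg_of_pos hε), Real.sign_of_neg (neg_neg_of_pos h2ε),
        Real.mul_rpow zero_le_two hε.le]
      module
    simpa [h2t] using eq_zero_of_isBigO_rpow_smul ht2 hodd

end FiniteDifferences

theorem Real.sign_mul_abs_rpow (t x : ℝ) : Real.sign x * |x| ^ t = x * |x| ^ (t - 1) := by
  rcases eq_or_ne x 0 with rfl | hx
  · simp
  rw [Real.rpow_sub_one (abs_ne_zero.2 hx)]
  rcases hx.lt_or_gt with hneg | hpos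
  · rw [Real.sign_of_neg hneg, abs_of_neg hneg]
    field_simp
  · rw [Real.sign_of_pos hpos, abs_of_pos hpos]
    field_simp

noncomputable def kerProfile (t : ℝ) (K1 : ℂ) (x : ℝ) : ℂ :=
  |x| ^ t • (K1.re : ℂ) + (Real.sign x * |x| ^ t) • (K1.im * I)

theorem kerK_eq_kerProfile (t : ℝ) (K1 : ℂ) (b d : ℝ) :
    kerK t K1 b d = kerProfile t K1 (b - d) - kerProfile t K1 b - kerProfile t K1 (-d) := by
  simp only [kerK, kerProfile, abs_neg, Real.sign_neg, Complex.real_smul, Complex.neg_re]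
  push_cast
  ring

theorem contDiffAt_kerProfile {n : WithTop ℕ∞} (t : ℝ) (K1 : ℂ) {x : ℝ} (hx : x ≠ 0) :
    ContDiffAt ℝ n (kerProfile t K1) x := by
  have habs : ∀ s : ℝ, ContDiffAt ℝ n (fun y : ℝ => |y| ^ s) x := fun s =>
    (Real.contDiffAt_rpow_const_of_ne (abs_ne_zero.2 hx)).comp x (contDiffAt_norm ℝ hx)
  unfold kerProfile
  simp_rw [Real.sign_mul_abs_rpow]
  exact ((habs t).smul contDiffAt_const).add
    ((contDiffAt_id.mul (habs (t - 1))).smul contDiffAt_const)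

theorem eq_zero_of_contDiffAt_mul_kerProfile {t : ℝ} (ht0 : 0 < t) (ht2 : t < 2) (ht1 : t ≠ 1)
    {K1 a : ℂ} (h : ContDiffAt ℝ 2 (fun x => a * kerProfile t K1 x) 0) : a = 0 ∨ K1 = 0 := by
  have hsplit : (fun x => a * kerProfile t K1 x) =
      fun x : ℝ => |x| ^ t • (a * K1.re) + (Real.sign x * |x| ^ t) • (a * (K1.im * I)) := by
    funext x
    simp only [kerProfile, Complex.real_smul]
    ring
  rw [hsplit] at h
  obtain ⟨hre, him⟩ := eq_zero_of_contDiffAt_abs_rpow_smul_add ht0 ht2 ht1 h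
  refine or_iff_not_imp_left.2 fun ha => Complex.ext ?_ ?_
  · simpa [ha] using hre
  · simpa [ha] using him

theorem eq_zero_of_forall_sum_mul_kerK_eq_zero {t : ℝ} (ht0 : 0 < t) (ht2 : t < 2) (ht1 : t ≠ 1)
    {K1 : ℂ} (hK1 : K1 ≠ 0) {ι : Type*} {b : ι → ℝ} (hb : Function.Injective b) {s : Finset ι}
    {a : ι → ℂ} (h : ∀ d, ∑ i ∈ s, a i * kerK t K1 (b i) d = 0) {j : ι} (hj : j ∈ s)
    (hbj : b j ≠ 0) : a j = 0 := by
  classical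
  have hrepr : (fun x => a j * kerProfile t K1 x) = fun x =>
      ∑ i ∈ s, a i * (kerProfile t K1 (b i) + kerProfile t K1 (-(b j - x))) -
        ∑ i ∈ s.erase j, a i * kerProfile t K1 (b i - (b j - x)) := by
    funext x
    have hx := h (b j - x)
    simp only [kerK_eq_kerProfile, mul_sub, Finset.sum_sub_distrib] at hx
    rw [← Finset.add_sum_erase s _ hj, sub_sub_cancel] at hx
    simp only [mul_add, Finset.sum_add_distrib]
    linear_combination hx
  have hsmooth : ContDiffAt ℝ 2 (fun x => a j * kerProfile t K1 x) 0 := by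
    rw [hrepr]
    refine (ContDiffAt.sum fun i _ => ?_).sub (ContDiffAt.sum fun i hi => ?_)
    · have : -(b j - 0) ≠ 0 := by simpa using hbj
      exact contDiffAt_const.mul (contDiffAt_const.add
        ((contDiffAt_kerProfile t K1 this).comp (f := fun x => -(b j - x)) 0 (by fun_prop)))
    · have : b i - (b j - 0) ≠ 0 := by
        simpa [sub_eq_zero] using hb.ne (Finset.ne_of_mem_erase hi)
      exact contDiffAt_const.mul
        ((contDiffAt_kerProfile t K1 this).comp (f := fun x => b i - (b j - x)) 0 (by fun_prop))
  exact (eq_zero_of_contDiffAt_mul_kerProfile ht0 ht2 ht1 hsmooth).resolve_right hK1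

theorem stmt9_general {H : Type*} [NormedAddCommGroup H] [InnerProductSpace ℂ H]
    (t : ℝ) (ht0 : 0 < t) (ht2 : t < 2) (ht1 : t ≠ 1)
    (K1 : ℂ) (hK1 : K1 ≠ 0) (c : ℝ → H)
    (hker : ∀ b d : ℝ, (inner ℂ (c b) (c d) : ℂ) = kerK t K1 b d) :
    LinearIndependent ℂ (fun b : {x : ℝ // x ≠ 0} => c b.val) := by
  rw [linearIndependent_iff']
  intro s g hsum j hj
  have hF : ∀ d, ∑ i ∈ s, starRingEnd ℂ (g i) * kerK t K1 i d = 0 := fun d => by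
    simpa [sum_inner, inner_smul_left, hker, mul_comm] using congrArg (inner ℂ · (c d)) hsum
  simpa using
    eq_zero_of_forall_sum_mul_kerK_eq_zero ht0 ht2 ht1 hK1 Subtype.val_injective hF hj j.2

theorem stmt9 {H : Type*} [NormedAddCommGroup H] [InnerProductSpace ℂ H] [CompleteSpace H]
    (t : ℝ) (ht0 : 0 < t) (ht2 : t < 2) (ht1 : t ≠ 1)
    (K1 : ℂ) (hK1 : K1 ≠ 0) (c : ℝ → H)
    (hker : ∀ b d : ℝ, (inner ℂ (c b) (c d) : ℂ) = kerK t K1 b d) :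
    LinearIndependent ℂ (fun b : {x : ℝ // x ≠ 0} => c b.val) :=
  stmt9_general t ht0 ht2 ht1 K1 hK1 c hker
end

section
/- For a point y in the unit-disc model of H¹_ℂ represented by w = aξ₁ + ξ₂ with Re(a) > 0, the Cartan argument satisfies lim_{b→∞} Cart(g(1,b)y, g(1,−b)y, y) = −π/2. -/
/-!
Both Hermitian products are affine in `b`: `B(g(1,c)w, w) = 2 Re a + c i`. Hence the product
`(2 Re a + 2b i)(2 Re a - b i)²` is `b³ ((2 Re a)/b + 2i)((2 Re a)/b - i)²`, and the second factor
tends to `2i · (-i)² = -2i`. Multiplying by the positive real `b³` does not change the argument,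
and `arg` is continuous at `-2i`, whose argument is `-π/2`.
-/

open Complex Filter Topology

/-- The Hermitian form in the isotropic basis `{ξ₁, ξ₂}`:
`B(ξ₁,ξ₁) = B(ξ₂,ξ₂) = 0`, `B(ξ₁,ξ₂) = 1`; vectors are given by their coordinates. -/
noncomputable def Bxi (v w : Fin 2 → ℂ) : ℂ :=
  v 0 * (starRingEnd ℂ) (w 1) + v 1 * (starRingEnd ℂ) (w 0)

/-- The action of `g(1,b)` on coordinates in the basis `{ξ₁, ξ₂}`. -/
noncomputable def gAct (b : ℝ) (v : Fin 2 → ℂ) : Fin 2 → ℂ :=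
  ![v 0 + Complex.I * b * v 1, v 1]

lemma Bxi_gAct (a : ℂ) (c : ℝ) :
    Bxi (gAct c ![a, 1]) ![a, 1] = 2 * a.re + c * I := by
  have h := add_conj a
  simp only [Bxi, gAct, Matrix.cons_val_zero, Matrix.cons_val_one, map_one]
  push_cast at h ⊢
  linear_combination h

lemma Complex.tendsto_arg_of_tendsto_inv_mul {α : Type*} {l : Filter α} {f : α → ℂ}
    {s : α → ℝ} {z : ℂ} (hz : z ∈ slitPlane) (hs : ∀ᶠ x in l, 0 < s x)
    (hf : Tendsto (fun x => ((s x)⁻¹ : ℂ) * f x) l (𝓝 z)) :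
    Tendsto (fun x => arg (f x)) l (𝓝 (arg z)) := by
  refine ((continuousAt_arg hz).tendsto.comp hf).congr' ?_
  filter_upwards [hs] with x hx
  simpa using arg_real_mul (f x) (inv_pos.mpr hx)

lemma tendsto_inv_cube_mul_cartan_product (r : ℝ) :
    Tendsto (fun b : ℝ =>
        ((b ^ 3 : ℝ) : ℂ)⁻¹ * ((2 * r + (2 * b : ℝ) * I) * (2 * r + (-b : ℝ) * I) ^ 2))
      atTop (𝓝 (-2 * I)) := by
  have hpoly : Tendsto (fun t : ℝ => (2 * r * t + 2 * I) * (2 * r * t - I) ^ 2) (𝓝 0)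
      (𝓝 (-2 * I)) := by
    have hcont : Continuous (fun t : ℝ => (2 * r * t + 2 * I) * (2 * r * t - I) ^ 2) := by
      fun_prop
    convert hcont.tendsto 0 using 2
    simp only [ofReal_zero, mul_zero, zero_add, zero_sub]
    linear_combination (-2 * I) * I_sq
  refine (hpoly.comp tendsto_inv_atTop_zero).congr' ?_
  filter_upwards [eventually_gt_atTop (0 : ℝ)] with b hb
  have hb_ne : (b : ℂ) ≠ 0 := by exact_mod_cast hb.ne'
  simp only [Function.comp_apply]
  push_cast
  field_simp
  ring

theorem stmt11_general (a : ℂ) :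
    Tendsto
      (fun b : ℝ =>
        Complex.arg (Bxi (gAct (2 * b) ![a, 1]) ![a, 1] *
          (Bxi (gAct (-b) ![a, 1]) ![a, 1]) ^ 2))
      atTop (𝓝 (-(Real.pi / 2))) := by
  have harg : arg (-2 * I) = -(Real.pi / 2) := by
    rw [show (-2 : ℂ) * I = ((2 : ℝ) : ℂ) * -I by push_cast; ring,
      arg_real_mul _ two_pos, arg_neg_I]
  have hslit : -2 * I ∈ slitPlane := by simp [mem_slitPlane_iff]
  rw [← harg]
  simp only [Bxi_gAct]
  exact tendsto_arg_of_tendsto_inv_mul hslit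
    (by filter_upwards [eventually_gt_atTop 0] with b hb; positivity)
    (tendsto_inv_cube_mul_cartan_product a.re)

theorem stmt11 (a : ℂ) (ha : 0 < a.re) :
    Tendsto
      (fun b : ℝ =>
        Complex.arg (Bxi (gAct (2 * b) ![a, 1]) ![a, 1] *
          (Bxi (gAct (-b) ![a, 1]) ![a, 1]) ^ 2))
      atTop (𝓝 (-(Real.pi / 2))) :=
  stmt11_general a
end

section
/- Let X be a set, H a complex Hilbert space, and f, g: X → H two maps whose images are total in H. If ⟨f(x), f(y)⟩ = ⟨g(x), g(y)⟩ for all x, y ∈ X, then there exists a unitary operator A on H with A∘f = g. -/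
/-!
Extend `f` and `g` linearly to finitely supported coefficient families `l : X →₀ ℂ`. Equal Gram
matrices give `‖∑ lₓ g x‖ = ‖∑ lₓ f x‖`, so `∑ lₓ f x ↦ ∑ lₓ g x` is a well-defined isometry
between the dense spans of `f` and `g`; it and its inverse extend by continuity, giving a unitary.
-/

open Finsupp

section Gram

variable {𝕜 X E F : Type*} [RCLike 𝕜] [NormedAddCommGroup E] [InnerProductSpace 𝕜 E]
  [NormedAddCommGroup F] [InnerProductSpace 𝕜 F] {f : X → E} {g : X → F}

theorem inner_linearCombination_eq_of_inner_eq
    (hinner : ∀ x y, inner 𝕜 (f x) (f y) = inner 𝕜 (g x) (g y)) (l m : X →₀ 𝕜) :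
    inner 𝕜 (linearCombination 𝕜 f l) (linearCombination 𝕜 f m) =
      inner 𝕜 (linearCombination 𝕜 g l) (linearCombination 𝕜 g m) := by
  simp only [linearCombination_apply, Finsupp.sum, sum_inner, inner_sum, inner_smul_left,
    inner_smul_right, hinner]

theorem norm_linearCombination_eq_of_inner_eq
    (hinner : ∀ x y, inner 𝕜 (f x) (f y) = inner 𝕜 (g x) (g y)) (l : X →₀ 𝕜) :
    ‖linearCombination 𝕜 g l‖ = ‖linearCombination 𝕜 f l‖ := by
  rw [norm_eq_sqrt_re_inner (𝕜 := 𝕜), norm_eq_sqrt_re_inner (𝕜 := 𝕜),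
    inner_linearCombination_eq_of_inner_eq hinner]

end Gram

theorem denseRange_linearCombination {𝕜 X E : Type*} [RCLike 𝕜] [NormedAddCommGroup E]
    [NormedSpace 𝕜 E] {f : X → E}
    (hf : (Submodule.span 𝕜 (Set.range f)).topologicalClosure = ⊤) :
    DenseRange (linearCombination 𝕜 f) := by
  rw [DenseRange, ← LinearMap.coe_range, range_linearCombination,
    Submodule.dense_iff_topologicalClosure_eq_top]
  exact hf

theorem exists_linearIsometryEquiv_comp_eq_of_inner_eq {𝕜 X E F : Type*} [RCLike 𝕜]
    [NormedAddCommGroup E] [InnerProductSpace 𝕜 E] [CompleteSpace E]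
    [NormedAddCommGroup F] [InnerProductSpace 𝕜 F] [CompleteSpace F] {f : X → E} {g : X → F}
    (hf : (Submodule.span 𝕜 (Set.range f)).topologicalClosure = ⊤)
    (hg : (Submodule.span 𝕜 (Set.range g)).topologicalClosure = ⊤)
    (hinner : ∀ x y, inner 𝕜 (f x) (f y) = inner 𝕜 (g x) (g y)) :
    ∃ A : E ≃ₗᵢ[𝕜] F, ∀ x, A (f x) = g x := by
  have hdf := denseRange_linearCombination hf
  have hdg := denseRange_linearCombination hg
  have hnorm : ∀ l, ‖linearCombination 𝕜 g (LinearEquiv.refl 𝕜 (X →₀ 𝕜) l)‖ =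
      ‖linearCombination 𝕜 f l‖ := norm_linearCombination_eq_of_inner_eq hinner
  let A : E ≃ₗᵢ[𝕜] F := (LinearEquiv.refl 𝕜 (X →₀ 𝕜)).extendOfIsometry
    (linearCombination 𝕜 f) (linearCombination 𝕜 g) hdf hdg hnorm
  refine ⟨A, fun x => ?_⟩
  have hA := LinearEquiv.extendOfIsometry_eq (LinearEquiv.refl 𝕜 (X →₀ 𝕜))
    (linearCombination 𝕜 f) (linearCombination 𝕜 g) hdf hdg hnorm (single x 1)
  simpa using hA

theorem stmt17 {X : Type*} {H : Type*} [NormedAddCommGroup H] [InnerProductSpace ℂ H]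
    [CompleteSpace H] (f g : X → H)
    (hf : (Submodule.span ℂ (Set.range f)).topologicalClosure = ⊤)
    (hg : (Submodule.span ℂ (Set.range g)).topologicalClosure = ⊤)
    (hinner : ∀ x y : X, (inner ℂ (f x) (f y) : ℂ) = inner ℂ (g x) (g y)) :
    ∃ A : H ≃ₗᵢ[ℂ] H, ∀ x : X, A (f x) = g x :=
  exists_linearIsometryEquiv_comp_eq_of_inner_eq hf hg hinner
end
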